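/- In the setting of the AdiaConvert construction, for every x, y ∈ 𝕏, s ∈ [0,1] and ε ∈ (0,1], the states |Ψ_x^+(s,ε)⟩ and |Ψ_y^−(s,ε)⟩ are orthogonal: ⟨Ψ_x^+(s,ε)|Ψ_y^−(s,ε)⟩ = 0. In particular, Λ(s,ε)|Ψ_x^+(s,ε)⟩ = 0 for every x ∈ 𝕏. -/

import Mathlib

noncomputable section
open scoped ComplexConjugate

namespace AdiaConvert

/-- Index type of the Hilbert space `H = H_O ⊕ (ℂⁿ ⊗ ℂ^{Σ∪{0̄}} ⊗ H_W)`, where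
`H_O = ℂ² ⊗ H'`, `H' = ℂ^V`, `H_W = ℂ^W`, and the blank symbol `0̄` is `Option.none`. -/
abbrev Idx (Al V W : Type*) (n : ℕ) : Type _ := (Fin 2 × V) ⊕ (Fin n × Option Al × W)

/-- The Hilbert space of the AdiaConvert algorithm. -/
abbrev Hsp (Al V W : Type*) (n : ℕ) : Type _ := EuclideanSpace ℂ (Idx Al V W n)

/-- Build a vector of `Hsp` from its coordinates. -/
def mk {Al V W : Type*} {n : ℕ} (f : Idx Al V W n → ℂ) : Hsp Al V W n :=
  (WithLp.equiv 2 _).symm f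

variable {Al V W X : Type*} {n : ℕ}

/-- `θ(s) = πs/2`. -/
def θ (s : ℝ) : ℝ := Real.pi * s / 2

/-- `ξ(s) = 2 cos θ(s) sin θ(s)`. -/
def ξ (s : ℝ) : ℝ := 2 * Real.cos (θ s) * Real.sin (θ s)

/-- The coordinates of `|y⁺⟩ = (|0̄⟩ + |y⟩)/√2`. -/
def gP [DecidableEq Al] (y : Al) : Option Al → ℂ := fun a =>
  if a = none then (Real.sqrt 2 : ℂ)⁻¹ else if a = some y then (Real.sqrt 2 : ℂ)⁻¹ else 0

/-- The coordinates of `|y⁻⟩ = (|0̄⟩ - |y⟩)/√2`. -/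
def gM [DecidableEq Al] (y : Al) : Option Al → ℂ := fun a =>
  if a = none then (Real.sqrt 2 : ℂ)⁻¹ else if a = some y then -(Real.sqrt 2 : ℂ)⁻¹ else 0

/-- `|k_x⁺(s)⟩ = cos θ(s) |0,ρ_x⟩ + sin θ(s) |1,σ_x⟩` (embedded in `H`). -/
def kP (ρv σv : X → EuclideanSpace ℂ V) (s : ℝ) (x : X) : Hsp Al V W n :=
  mk fun q => match q with
  | .inl (b, i) => if b = 0 then (Real.cos (θ s) : ℂ) * ρv x i
                   else (Real.sin (θ s) : ℂ) * σv x i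
  | .inr _ => 0

/-- `|k_x⁻(s)⟩ = -sin θ(s) |0,ρ_x⟩ + cos θ(s) |1,σ_x⟩` (embedded in `H`). -/
def kM (ρv σv : X → EuclideanSpace ℂ V) (s : ℝ) (x : X) : Hsp Al V W n :=
  mk fun q => match q with
  | .inl (b, i) => if b = 0 then -(Real.sin (θ s) : ℂ) * ρv x i
                   else (Real.cos (θ s) : ℂ) * σv x i
  | .inr _ => 0

/-- `∑ᵢ |i⟩ ⊗ |x_i^±⟩ ⊗ |c_{x,i}⟩` (embedded in `H`), where the `ℂ^{Σ∪{0̄}}` part has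
coordinates `g (x_i)`. -/
def qPart (g : Al → Option Al → ℂ) (inp : X → Fin n → Al)
    (c : X → Fin n → EuclideanSpace ℂ W) (x : X) : Hsp Al V W n :=
  mk fun q => match q with
  | .inl _ => 0
  | .inr (i, a, w) => g (inp x i) a * c x i w

/-- The non-normalized state `|Ψ_x⁺(s,ε)⟩`. -/
def PsiP [DecidableEq Al] (ρv σv : X → EuclideanSpace ℂ V) (inp : X → Fin n → Al)
    (u : X → Fin n → EuclideanSpace ℂ W) (Wr s ε : ℝ) (x : X) : Hsp Al V W n :=
  kP ρv σv s x + ((ε / Real.sqrt Wr : ℝ) : ℂ) • qPart gP inp u x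

/-- The non-normalized state `|Ψ_x⁻(s,ε)⟩`. -/
def PsiM [DecidableEq Al] (ρv σv : X → EuclideanSpace ℂ V) (inp : X → Fin n → Al)
    (v : X → Fin n → EuclideanSpace ℂ W) (Wr s ε : ℝ) (x : X) : Hsp Al V W n :=
  kM ρv σv s x + ((ξ s * (Real.sqrt Wr / ε) : ℝ) : ℂ) • qPart gM inp v x

/-- The normalized state `|ψ_x⁺(s,ε)⟩`. -/
def psiP [Fintype Al] [Fintype V] [Fintype W] [DecidableEq Al] (ρv σv : X → EuclideanSpace ℂ V) (inp : X → Fin n → Al)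
    (u : X → Fin n → EuclideanSpace ℂ W) (Wr s ε : ℝ) (x : X) : Hsp Al V W n :=
  ‖PsiP ρv σv inp u Wr s ε x‖⁻¹ • PsiP ρv σv inp u Wr s ε x

/-- The rank-one operator `|a⟩⟨b| : v ↦ ⟨b|v⟩·a`. -/
def ketbra [Fintype Al] [Fintype V] [Fintype W]
    (a b : Hsp Al V W n) : Hsp Al V W n →L[ℂ] Hsp Al V W n :=
  (innerSL ℂ b).smulRight a

/-- The orthogonal projection `Λ(s,ε)` onto `span{|Ψ_x⁻(s,ε)⟩ : x ∈ 𝕏}`. -/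
def Lam [Fintype Al] [Fintype V] [Fintype W] [DecidableEq Al]
    (ρv σv : X → EuclideanSpace ℂ V) (inp : X → Fin n → Al)
    (v : X → Fin n → EuclideanSpace ℂ W) (Wr s ε : ℝ) :
    Hsp Al V W n →L[ℂ] Hsp Al V W n :=
  (Submodule.span ℂ (Set.range fun x : X => PsiM ρv σv inp v Wr s ε x)).subtypeL.comp
    (Submodule.orthogonalProjectionOnto
      (Submodule.span ℂ (Set.range fun x : X => PsiM ρv σv inp v Wr s ε x)))

/-- The matrix of the oracle Hamiltonian `Π_x = ∑ᵢ |i⟩⟨i| ⊗ |x_i⁻⟩⟨x_i⁻| ⊗ I_W`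
(acting as `0` on `H_O`). -/
def PiMat [DecidableEq Al] [DecidableEq W] (inp : X → Fin n → Al) (x : X) :
    Matrix (Idx Al V W n) (Idx Al V W n) ℂ :=
  fun q q' => match q, q' with
  | .inr (i, a, w), .inr (i', a', w') =>
      if i = i' ∧ w = w' then gM (inp x i) a * conj (gM (inp x i) a') else 0
  | _, _ => 0

/-- The oracle Hamiltonian `Π_x` as an operator on `H`. -/
def PiC [Fintype Al] [Fintype V] [Fintype W]
    [DecidableEq Al] [DecidableEq V] [DecidableEq W]
    (inp : X → Fin n → Al) (x : X) : Hsp Al V W n →L[ℂ] Hsp Al V W n :=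
  Matrix.toEuclideanCLM (𝕜 := ℂ) (PiMat inp x)

/-- The total Hamiltonian `H_x(s,ε) = Λ(s,ε) − Π_x`. -/
def Hx [Fintype Al] [Fintype V] [Fintype W]
    [DecidableEq Al] [DecidableEq V] [DecidableEq W]
    (ρv σv : X → EuclideanSpace ℂ V) (inp : X → Fin n → Al)
    (v : X → Fin n → EuclideanSpace ℂ W) (Wr s ε : ℝ) (x : X) :
    Hsp Al V W n →L[ℂ] Hsp Al V W n :=
  Lam ρv σv inp v Wr s ε - PiC inp x

/-- The projection `P_x(s,ε) = |ψ_x⁺(s,ε)⟩⟨ψ_x⁺(s,ε)|`. -/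
def Pproj [Fintype Al] [Fintype V] [Fintype W] [DecidableEq Al]
    (ρv σv : X → EuclideanSpace ℂ V) (inp : X → Fin n → Al)
    (u : X → Fin n → EuclideanSpace ℂ W) (Wr s ε : ℝ) (x : X) :
    Hsp Al V W n →L[ℂ] Hsp Al V W n :=
  ketbra (psiP ρv σv inp u Wr s ε x) (psiP ρv σv inp u Wr s ε x)

/-- The operator `X_x(s,ε) = (π/(2N_x(ε))) |Ψ_x⁻(s,ε)⟩⟨ψ_x⁺(s,ε)|`. -/
def Xx [Fintype Al] [Fintype V] [Fintype W] [DecidableEq Al]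
    (ρv σv : X → EuclideanSpace ℂ V) (inp : X → Fin n → Al)
    (u v : X → Fin n → EuclideanSpace ℂ W) (Wr s ε : ℝ) (x : X) :
    Hsp Al V W n →L[ℂ] Hsp Al V W n :=
  ((Real.pi / (2 * ‖PsiP ρv σv inp u Wr s ε x‖) : ℝ) : ℂ) •
    ketbra (PsiM ρv σv inp v Wr s ε x) (psiP ρv σv inp u Wr s ε x)

end AdiaConvert

open AdiaConvert

/-!
In `H_O`, `⟨k_x⁺|k_y⁻⟩ = cos θ sin θ (⟨σ_x|σ_y⟩ - ⟨ρ_x|ρ_y⟩)`; `H_O` is orthogonal to the second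
summand of `H`; and there `⟨x_i⁺|y_i⁻⟩` is `1/2` when `x_i ≠ y_i` and `0` otherwise,
while the weights `ε/√W` and `ξ √W/ε` multiply to `ξ = 2 cos θ sin θ`. Hence
`⟨Ψ_x⁺|Ψ_y⁻⟩ = cos θ sin θ (∑_{x_i ≠ y_i} ⟨u_{x,i}|v_{y,i}⟩ - (⟨ρ_x|ρ_y⟩ - ⟨σ_x|σ_y⟩))`, which vanishes
by the adversary relation. A vector orthogonal to every `Ψ_y⁻` is killed by the projection `Λ`.
-/

theorem Submodule.orthogonalProjectionOnto_span_range_eq_zero {𝕜 E ι : Type*} [RCLike 𝕜]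
    [NormedAddCommGroup E] [InnerProductSpace 𝕜 E] {f : ι → E}
    [(Submodule.span 𝕜 (Set.range f)).HasOrthogonalProjection] {v : E}
    (h : ∀ i, inner 𝕜 v (f i) = 0) :
    (Submodule.span 𝕜 (Set.range f)).orthogonalProjectionOnto v = 0 := by
  refine orthogonalProjectionOnto_apply_of_mem_orthogonal <|
    isOrtho_iff_le.mp (isOrtho_span.mpr ?_) (mem_span_singleton_self v)
  rintro _ rfl _ ⟨i, rfl⟩
  exact h i

namespace AdiaConvert

variable {Al V W X : Type*} {n : ℕ} [Fintype Al] [Fintype V] [Fintype W]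

theorem inner_mk_mk (f g : Idx Al V W n → ℂ) :
    inner ℂ (mk f) (mk g) = ∑ q, conj (f q) * g q := by
  simp [mk, PiLp.inner_apply, mul_comm]

theorem inner_kP_qPart (ρv σv : X → EuclideanSpace ℂ V) (g : Al → Option Al → ℂ)
    (inp : X → Fin n → Al) (c : X → Fin n → EuclideanSpace ℂ W) (s : ℝ) (x y : X) :
    inner ℂ (kP ρv σv s x : Hsp Al V W n) (qPart g inp c y) = 0 := by
  simp [kP, qPart, inner_mk_mk]

theorem inner_qPart_kM (ρv σv : X → EuclideanSpace ℂ V) (g : Al → Option Al → ℂ)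
    (inp : X → Fin n → Al) (c : X → Fin n → EuclideanSpace ℂ W) (s : ℝ) (x y : X) :
    inner ℂ (qPart g inp c x : Hsp Al V W n) (kM ρv σv s y) = 0 := by
  simp [kM, qPart, inner_mk_mk]

theorem inner_kP_kM (ρv σv : X → EuclideanSpace ℂ V) (s : ℝ) (x y : X) :
    inner ℂ (kP ρv σv s x : Hsp Al V W n) (kM ρv σv s y) =
      Real.sin (θ s) * Real.cos (θ s) *
        (inner ℂ (σv x) (σv y) - inner ℂ (ρv x) (ρv y)) := by
  rw [kP, kM, inner_mk_mk, Fintype.sum_sum_type]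
  simp only [Fintype.sum_prod_type, Fin.sum_univ_two, PiLp.inner_apply, RCLike.inner_apply,
    if_pos, one_ne_zero, if_false, map_mul, Complex.conj_ofReal, map_zero, zero_mul,
    Finset.sum_const_zero, add_zero, mul_sub, Finset.mul_sum, ← Finset.sum_add_distrib,
    ← Finset.sum_sub_distrib]
  exact Finset.sum_congr rfl fun _ _ => by ring

theorem inner_qPart_qPart (g g' : Al → Option Al → ℂ) (inp : X → Fin n → Al)
    (c c' : X → Fin n → EuclideanSpace ℂ W) (x y : X) :
    inner ℂ (qPart g inp c x : Hsp Al V W n) (qPart g' inp c' y) =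
      ∑ i, (∑ a, conj (g (inp x i) a) * g' (inp y i) a) * inner ℂ (c x i) (c' y i) := by
  rw [qPart, qPart, inner_mk_mk, Fintype.sum_sum_type]
  simp only [map_zero, zero_mul, Finset.sum_const_zero, zero_add, Fintype.sum_prod_type,
    PiLp.inner_apply, RCLike.inner_apply, Finset.sum_mul_sum, map_mul]
  exact Finset.sum_congr rfl fun _ _ => Finset.sum_congr rfl fun _ _ =>
    Finset.sum_congr rfl fun _ _ => by ring

theorem sum_conj_gP_mul_gM [DecidableEq Al] (p q : Al) :
    ∑ a, conj (gP p a) * gM q a = if p = q then 0 else 1 / 2 := by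
  have hsqrt : ((√2 : ℝ) : ℂ)⁻¹ * ((√2 : ℝ) : ℂ)⁻¹ = 1 / 2 := by
    rw [← mul_inv, ← Complex.ofReal_mul, Real.mul_self_sqrt zero_le_two]
    norm_num
  split_ifs with h
  · subst h
    simp [Fintype.sum_option, gP, gM, hsqrt]
  · simp [Fintype.sum_option, gP, gM, Ne.symm h, hsqrt]

theorem inner_qPart_gP_qPart_gM [DecidableEq Al] (inp : X → Fin n → Al)
    (u v : X → Fin n → EuclideanSpace ℂ W) (x y : X) :
    inner ℂ (qPart gP inp u x : Hsp Al V W n) (qPart gM inp v y) =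
      1 / 2 * ∑ i ∈ Finset.univ.filter (fun i => inp x i ≠ inp y i), inner ℂ (u x i) (v y i) := by
  simp only [inner_qPart_qPart, sum_conj_gP_mul_gM, Finset.mul_sum, Finset.sum_filter, mul_ite,
    mul_zero, ite_mul, zero_mul, ite_not]

theorem inner_PsiP_PsiM [DecidableEq Al] (ρv σv : X → EuclideanSpace ℂ V) (inp : X → Fin n → Al)
    (u v : X → Fin n → EuclideanSpace ℂ W) {Wr ε : ℝ} (hW : 0 < Wr) (hε : ε ≠ 0) (s : ℝ)
    (x y : X) :
    inner ℂ (PsiP ρv σv inp u Wr s ε x : Hsp Al V W n) (PsiM ρv σv inp v Wr s ε y) =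
      Real.cos (θ s) * Real.sin (θ s) *
        (∑ i ∈ Finset.univ.filter (fun i => inp x i ≠ inp y i), inner ℂ (u x i) (v y i) -
          (inner ℂ (ρv x) (ρv y) - inner ℂ (σv x) (σv y))) := by
  have hscale : ((ε / √Wr : ℝ) : ℂ) * ((ξ s * (√Wr / ε) : ℝ) : ℂ) =
      2 * Real.cos (θ s) * Real.sin (θ s) := by
    have : √Wr ≠ 0 := (Real.sqrt_pos.mpr hW).ne'
    rw [← Complex.ofReal_mul, ξ]
    field_simp
    push_cast
    ring
  rw [PsiP, PsiM, inner_add_left, inner_add_right, inner_add_right, inner_smul_left,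
    inner_smul_right, inner_smul_right, inner_smul_left, inner_kP_qPart, inner_qPart_kM,
    inner_kP_kM, inner_qPart_gP_qPart_gM, Complex.conj_ofReal]
  linear_combination
    (∑ i ∈ Finset.univ.filter (fun i => inp x i ≠ inp y i), inner ℂ (u x i) (v y i)) / 2 * hscale

theorem Lam_apply_eq_zero_of_forall_inner_PsiM [DecidableEq Al] (ρv σv : X → EuclideanSpace ℂ V)
    (inp : X → Fin n → Al) (v : X → Fin n → EuclideanSpace ℂ W) (Wr s ε : ℝ)
    {w : Hsp Al V W n} (h : ∀ y, inner ℂ w (PsiM ρv σv inp v Wr s ε y) = 0) :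
    Lam ρv σv inp v Wr s ε w = 0 := by
  simp [Lam, Submodule.orthogonalProjectionOnto_span_range_eq_zero h]

end AdiaConvert

theorem stmt13_general
    {Al V W : Type*} [Fintype Al] [DecidableEq Al] [Fintype V]
    [Fintype W]
    {n : ℕ} {X : Type*} (inp : X → Fin n → Al)
    (ρv σv : X → EuclideanSpace ℂ V)
    (Wr : ℝ) (hW : 0 < Wr)
    (u v : X → Fin n → EuclideanSpace ℂ W)
    (hadv : ∀ x y : X,
      (inner ℂ (ρv x) (ρv y) : ℂ) - (inner ℂ (σv x) (σv y) : ℂ) =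
        ∑ i ∈ Finset.univ.filter (fun i => inp x i ≠ inp y i),
          (inner ℂ (u x i) (v y i) : ℂ))
    (ε : ℝ) (hε0 : 0 < ε) :
    ∀ s ∈ Set.Icc (0:ℝ) 1,
      (∀ x y : X,
        (inner ℂ (PsiP (Al := Al) ρv σv inp u Wr s ε x)
          (PsiM ρv σv inp v Wr s ε y) : ℂ) = 0) ∧
      (∀ x : X,
        Lam ρv σv inp v Wr s ε (PsiP ρv σv inp u Wr s ε x) = 0) := by
  intro s _
  have horth : ∀ x y : X,
      inner ℂ (PsiP (Al := Al) ρv σv inp u Wr s ε x) (PsiM ρv σv inp v Wr s ε y) = 0 :=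
    fun x y => by rw [inner_PsiP_PsiM ρv σv inp u v hW hε0.ne', hadv, sub_self, mul_zero]
  exact ⟨horth, fun x => Lam_apply_eq_zero_of_forall_inner_PsiM ρv σv inp v Wr s ε (horth x)⟩

/-- the states `|Ψ_x⁺(s,ε)⟩` and `|Ψ_y⁻(s,ε)⟩` are orthogonal for all
`x, y ∈ 𝕏`; in particular `Λ(s,ε)|Ψ_x⁺(s,ε)⟩ = 0`. -/
theorem stmt13
    {Al V W : Type*} [Fintype Al] [DecidableEq Al] [Fintype V] [DecidableEq V]
    [Fintype W] [DecidableEq W]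
    {n : ℕ} {X : Type*} [Fintype X] (inp : X → Fin n → Al)
    (ρv σv : X → EuclideanSpace ℂ V)
    (hρ : ∀ x, ‖ρv x‖ = 1) (hσ : ∀ x, ‖σv x‖ = 1)
    (Wr : ℝ) (hW : 0 < Wr)
    (u v : X → Fin n → EuclideanSpace ℂ W)
    (hu : ∀ x, ∑ i, ‖u x i‖ ^ 2 ≤ Wr) (hv : ∀ x, ∑ i, ‖v x i‖ ^ 2 ≤ Wr)
    (hadv : ∀ x y : X,
      (inner ℂ (ρv x) (ρv y) : ℂ) - (inner ℂ (σv x) (σv y) : ℂ) =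
        ∑ i ∈ Finset.univ.filter (fun i => inp x i ≠ inp y i),
          (inner ℂ (u x i) (v y i) : ℂ))
    (ε : ℝ) (hε0 : 0 < ε) (hε1 : ε ≤ 1) :
    ∀ s ∈ Set.Icc (0:ℝ) 1,
      (∀ x y : X,
        (inner ℂ (PsiP (Al := Al) ρv σv inp u Wr s ε x)
          (PsiM ρv σv inp v Wr s ε y) : ℂ) = 0) ∧
      (∀ x : X,
        Lam ρv σv inp v Wr s ε (PsiP ρv σv inp u Wr s ε x) = 0) :=
  stmt13_general inp ρv σv Wr hW u v hadv ε hε0
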